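/- arXiv:1907.03844 — 3 statements merged into one kernel-verified Lean document; each statement's English description precedes it below -/
import Mathlib

section
/- Let n ≥ 3 and let N be a regular subgroup of B = Perm(D_n) isomorphic to D_n and normalized by λ(D_n). Let K ≤ N be a characteristic subgroup of N of index 2, and let X = K·1 be the K-orbit of the identity element. Then: (a) if n is odd, X = X_0; (b) if n is even, X equals X_0, X_1, or X_2. -/
/-!
Because `K` is characteristic in `N` and `λ(D_n)` normalizes `N`, `λ(D_n)` also normalizes `K`.
This makes the orbit `K · 1` a subgroup of `D_n`: `σ 1 * τ 1 = (λ(σ 1) τ λ(σ 1)⁻¹ σ) 1`.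
By regularity, `σ ↦ σ 1` is a bijection `N → D_n` carrying the cosets of `K` onto those of
`K · 1`, so `K · 1` has index 2 in `D_n`. An index-2 subgroup of `D_n` is determined by
whether it contains `x` and `t`, which gives `X₀`, `X₁` or `X₂`; for odd `n` the generator `x`
is a square, so only `X₀` occurs.
-/

/-- A subgroup of `Equiv.Perm Z` is regular if it acts transitively and
no non-identity element has a fixed point. -/
def IsRegularSubgroup {Z : Type*} (N : Subgroup (Equiv.Perm Z)) : Prop :=
  (∀ z w : Z, ∃ σ ∈ N, σ z = w) ∧ ∀ σ ∈ N, σ ≠ 1 → ∀ z : Z, σ z ≠ z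

/-- The wreath-product subgroup `W(X, Y)` (with `Y = Xᶜ`): all permutations that
either fix both `X` and `Y` setwise, or interchange them. -/
def wprod {Z : Type*} (X : Set Z) : Subgroup (Equiv.Perm Z) where
  carrier := {w | (w '' X = X ∧ w '' Xᶜ = Xᶜ) ∨ (w '' X = Xᶜ ∧ w '' Xᶜ = X)}
  one_mem' := by simp
  mul_mem' := by
    rintro a b (⟨ha1, ha2⟩ | ⟨ha1, ha2⟩) (⟨hb1, hb2⟩ | ⟨hb1, hb2⟩) <;>
      simp only [Set.mem_setOf_eq, Equiv.Perm.coe_mul, Set.image_comp, hb1, hb2, ha1, ha2] <;>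
      tauto
  inv_mem' := by
    intro a h
    have key : ∀ S T : Set Z, a '' S = T → (a⁻¹ : Equiv.Perm Z) '' T = S := by
      intro S T hST
      rw [← hST, Set.image_image]
      simp
    rcases h with ⟨h1, h2⟩ | ⟨h1, h2⟩
    · exact Or.inl ⟨key _ _ h1, key _ _ h2⟩
    · exact Or.inr ⟨key _ _ h2, key _ _ h1⟩

/-- The image of the left regular representation `λ : G → Perm G`. -/
def leftRegRange (G : Type*) [Group G] : Subgroup (Equiv.Perm G) :=
  (MulAction.toPermHom G G).range

/-- `|Υ_n|`: number of units of exponent 2 mod `n`. -/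
noncomputable def upsilonCard (n : ℕ) : ℕ :=
  Nat.card {u : (ZMod n)ˣ // u ^ 2 = 1}

/-- `X₀`: the set of rotations in `D_n`. -/
def dihedralX0 (n : ℕ) : Set (DihedralGroup n) :=
  Set.range (DihedralGroup.r : ZMod n → DihedralGroup n)

/-- `X₁ = {x^b : b even} ∪ {t x^b : b even}`. -/
def dihedralX1 (n : ℕ) : Set (DihedralGroup n) :=
  Set.range (fun c : ZMod n => DihedralGroup.r (2 * c)) ∪
    Set.range (fun c : ZMod n => DihedralGroup.sr (2 * c))

/-- `X₂ = {x^b : b even} ∪ {t x^b : b odd}`. -/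
def dihedralX2 (n : ℕ) : Set (DihedralGroup n) :=
  Set.range (fun c : ZMod n => DihedralGroup.r (2 * c)) ∪
    Set.range (fun c : ZMod n => DihedralGroup.sr (2 * c + 1))

/-- `N ∈ R(D_n, [D_n])`: a regular subgroup of `Perm(D_n)` isomorphic to `D_n`
and normalized by the left regular representation `λ(D_n)`. -/
def IsDihedralHGS (n : ℕ) (N : Subgroup (Equiv.Perm (DihedralGroup n))) : Prop :=
  IsRegularSubgroup N ∧ Nonempty (N ≃* DihedralGroup n) ∧
    leftRegRange (DihedralGroup n) ≤ Subgroup.normalizer (N : Set (Equiv.Perm (DihedralGroup n)))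

theorem Subgroup.normalizer_le_normalizer_of_characteristic {G : Type*} [Group G]
    {N K : Subgroup G} (hKN : K ≤ N) (hK : (K.subgroupOf N).Characteristic) :
    normalizer (N : Set G) ≤ normalizer (K : Set G) := by
  intro g hg
  rw [mem_normalizer_iff_map_conj_eq] at hg ⊢
  let φ : N ≃* N := ((MulAut.conj g).subgroupMap N).trans (MulEquiv.subgroupCongr hg)
  have hK' : (K.subgroupOf N).map N.subtype = K := by
    rw [subgroupOf_map_subtype, inf_of_le_left hKN]
  calc map (MulAut.conj g) K = ((K.subgroupOf N).map φ.toMonoidHom).map N.subtype := by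
        conv_lhs => rw [← hK']
        rw [map_map, map_map]; rfl
    _ = K := by rw [characteristic_iff_map_eq.mp hK φ, hK']

namespace IsRegularSubgroup

variable {Z : Type*} {N : Subgroup (Equiv.Perm Z)}

theorem eq_of_apply_eq (hN : IsRegularSubgroup N) {σ τ : Equiv.Perm Z} (hσ : σ ∈ N)
    (hτ : τ ∈ N) {z : Z} (h : σ z = τ z) : σ = τ := by
  by_contra hne
  refine hN.2 (σ⁻¹ * τ) (N.mul_mem (N.inv_mem hσ) hτ) (hne ∘ inv_mul_eq_one.mp) z ?_
  rw [Equiv.Perm.mul_apply, ← h]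
  exact σ.symm_apply_apply z

theorem bijective_apply (hN : IsRegularSubgroup N) (z : Z) :
    Function.Bijective fun σ : N => (σ : Equiv.Perm Z) z :=
  ⟨fun σ τ h => Subtype.ext (hN.eq_of_apply_eq σ.2 τ.2 h),
    fun w => let ⟨σ, hσ, h⟩ := hN.1 z w; ⟨⟨σ, hσ⟩, h⟩⟩

end IsRegularSubgroup

section OrbitSubgroup

open Equiv MulAction Subgroup

variable {G : Type*} [Group G] {K : Subgroup (Perm G)}

theorem toPerm_mul_mul_inv_mem (hK : leftRegRange G ≤ normalizer (K : Set (Perm G))) (g : G)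
    {σ : Perm G} (hσ : σ ∈ K) : (toPerm g : Perm G) * σ * (toPerm g)⁻¹ ∈ K :=
  (mem_normalizer_iff.mp (hK ⟨g, rfl⟩) σ).mp hσ

def orbitSubgroup (K : Subgroup (Perm G)) (hK : leftRegRange G ≤ normalizer (K : Set (Perm G))) :
    Subgroup G where
  carrier := (fun σ : Perm G => σ 1) '' K
  one_mem' := ⟨1, K.one_mem, rfl⟩
  mul_mem' := by
    rintro - - ⟨σ, hσ, rfl⟩ ⟨τ, hτ, rfl⟩
    refine ⟨toPerm (σ 1) * τ * (toPerm (σ 1))⁻¹ * σ,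
      K.mul_mem (toPerm_mul_mul_inv_mem hK _ hτ) hσ, ?_⟩
    simp
  inv_mem' := by
    rintro - ⟨σ, hσ, rfl⟩
    refine ⟨toPerm (σ 1)⁻¹ * σ⁻¹ * (toPerm (σ 1)⁻¹)⁻¹,
      toPerm_mul_mul_inv_mem hK _ (K.inv_mem hσ), ?_⟩
    simp

theorem mem_orbitSubgroup (hK : leftRegRange G ≤ normalizer (K : Set (Perm G))) {x : G} :
    x ∈ orbitSubgroup K hK ↔ ∃ σ ∈ K, σ 1 = x :=
  Iff.rfl

theorem exists_apply_eq_iff_inv_mul_mem_orbitSubgroup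
    (hK : leftRegRange G ≤ normalizer (K : Set (Perm G))) (g y : G) :
    (∃ σ ∈ K, σ g = y) ↔ g⁻¹ * y ∈ orbitSubgroup K hK := by
  rw [mem_orbitSubgroup]
  constructor
  · rintro ⟨σ, hσ, rfl⟩
    exact ⟨_, toPerm_mul_mul_inv_mem hK g⁻¹ hσ, by simp⟩
  · rintro ⟨σ, hσ, h⟩
    exact ⟨_, toPerm_mul_mul_inv_mem hK g hσ, by simp [h]⟩

theorem relIndex_eq_index_orbitSubgroup {N : Subgroup (Perm G)} (hN : IsRegularSubgroup N)
    (hKN : K ≤ N) (hKnormal : (K.subgroupOf N).Normal)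
    (hK : leftRegRange G ≤ normalizer (K : Set (Perm G))) :
    K.relIndex N = (orbitSubgroup K hK).index := by
  refine Nat.card_congr <|
    Quotient.congr (Equiv.ofBijective _ (hN.bijective_apply 1)) fun σ τ => ?_
  rw [QuotientGroup.leftRel_apply, QuotientGroup.leftRel_apply, hKnormal.mem_comm_iff,
    mem_subgroupOf, ← exists_apply_eq_iff_inv_mul_mem_orbitSubgroup]
  constructor
  · intro h
    exact ⟨_, h, by simp⟩
  · rintro ⟨κ, hκ, h⟩
    have hτ : κ * σ = τ := hN.eq_of_apply_eq (N.mul_mem (hKN hκ) σ.2) τ.2 h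
    simpa [← hτ] using hκ

end OrbitSubgroup

theorem ZMod.exists_two_mul_eq_or_two_mul_add_one_eq {n : ℕ} (b : ZMod n) :
    (∃ c, 2 * c = b) ∨ ∃ c, 2 * c + 1 = b := by
  obtain ⟨m, rfl⟩ := ZMod.intCast_surjective b
  rcases Int.even_or_odd' m with ⟨k, rfl | rfl⟩
  · exact Or.inl ⟨k, by push_cast; ring⟩
  · exact Or.inr ⟨k, by push_cast; ring⟩

theorem ZMod.exists_two_mul_eq_one_of_odd {n : ℕ} (hn : Odd n) : ∃ c : ZMod n, 2 * c = 1 :=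
  ((ZMod.isUnit_iff_coprime 2 n).mpr (Nat.coprime_two_left.mpr hn)).exists_right_inv

namespace DihedralGroup

variable {n : ℕ} {H : Subgroup (DihedralGroup n)}

theorem r_mem_of_r_one_mem (h1 : r 1 ∈ H) (b : ZMod n) : r b ∈ H := by
  obtain ⟨m, rfl⟩ := ZMod.intCast_surjective b
  rw [← r_one_zpow]
  exact zpow_mem h1 m

theorem r_two_mul_mem (hH : H.index = 2) (c : ZMod n) : r (2 * c) ∈ H := by
  simpa [r_mul_r, two_mul] using Subgroup.mul_self_mem_of_index_two hH (r c)

theorem r_one_mem_of_odd (hn : Odd n) (hH : H.index = 2) : r 1 ∈ H := by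
  obtain ⟨c, hc⟩ := ZMod.exists_two_mul_eq_one_of_odd hn
  simpa [hc] using r_two_mul_mem hH c

theorem r_mem_iff_of_r_one_notMem (hH : H.index = 2) (h1 : r 1 ∉ H) (b : ZMod n) :
    r b ∈ H ↔ ∃ c, 2 * c = b := by
  refine ⟨fun hb => ?_, fun ⟨c, hc⟩ => hc ▸ r_two_mul_mem hH c⟩
  refine (ZMod.exists_two_mul_eq_or_two_mul_add_one_eq b).resolve_right ?_
  rintro ⟨c, rfl⟩
  rw [← r_mul_r, Subgroup.mul_mem_iff_of_index_two hH] at hb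
  exact h1 (hb.mp (r_two_mul_mem hH c))

theorem sr_mem_iff_of_index_eq_two (hH : H.index = 2) (b : ZMod n) :
    sr b ∈ H ↔ (sr 0 ∈ H ↔ r b ∈ H) := by
  rw [← Subgroup.mul_mem_iff_of_index_two hH, sr_mul_r, zero_add]

theorem coe_eq_dihedralX0 (hH : H.index = 2) (h1 : r 1 ∈ H) :
    (H : Set (DihedralGroup n)) = dihedralX0 n := by
  have hsr0 : sr 0 ∉ H := by
    intro hsr0
    have htop : H = ⊤ := by
      rw [eq_top_iff]
      rintro (b | b) -
      · exact r_mem_of_r_one_mem h1 b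
      · exact (sr_mem_iff_of_index_eq_two hH b).mpr (iff_of_true hsr0 (r_mem_of_r_one_mem h1 b))
    simp [htop] at hH
  ext (b | b)
  · simpa [dihedralX0] using r_mem_of_r_one_mem h1 b
  · rw [SetLike.mem_coe, sr_mem_iff_of_index_eq_two hH]
    simp [dihedralX0, hsr0, r_mem_of_r_one_mem h1 b]

theorem coe_eq_dihedralX1_or_dihedralX2 (hH : H.index = 2) (h1 : r 1 ∉ H) :
    (H : Set (DihedralGroup n)) = dihedralX1 n ∨ (H : Set (DihedralGroup n)) = dihedralX2 n := by
  have hr := r_mem_iff_of_r_one_notMem hH h1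
  by_cases hsr0 : sr 0 ∈ H
  · left
    ext (b | b)
    · simp [dihedralX1, hr]
    · rw [SetLike.mem_coe, sr_mem_iff_of_index_eq_two hH]
      simp [dihedralX1, hsr0, hr]
  · right
    have hodd : ∀ b : ZMod n, (¬∃ c, 2 * c = b) ↔ ∃ c, 2 * c + 1 = b := by
      refine fun b => ⟨(ZMod.exists_two_mul_eq_or_two_mul_add_one_eq b).resolve_left, ?_⟩
      rintro ⟨c, rfl⟩ ⟨c', hc'⟩
      exact h1 ((hr 1).mpr ⟨c' - c, by linear_combination hc'⟩)
    ext (b | b)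
    · simp [dihedralX2, hr]
    · rw [SetLike.mem_coe, sr_mem_iff_of_index_eq_two hH]
      simp [dihedralX2, hsr0, hr, hodd]

end DihedralGroup

theorem block_of_regular_dihedral_general (n : ℕ)
    (N K : Subgroup (Equiv.Perm (DihedralGroup n))) (hN : IsDihedralHGS n N)
    (hKN : K ≤ N) (hKidx : K.relIndex N = 2) (hKchar : (K.subgroupOf N).Characteristic)
    (X : Set (DihedralGroup n))
    (hX : X = (fun σ : Equiv.Perm (DihedralGroup n) => σ 1) '' (K : Set (Equiv.Perm (DihedralGroup n)))) :
    (Odd n → X = dihedralX0 n) ∧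
    (Even n → X = dihedralX0 n ∨ X = dihedralX1 n ∨ X = dihedralX2 n) := by
  obtain ⟨hreg, -, hnorm⟩ := hN
  have hK := hnorm.trans (Subgroup.normalizer_le_normalizer_of_characteristic hKN hKchar)
  have hindex : (orbitSubgroup K hK).index = 2 := by
    rw [← relIndex_eq_index_orbitSubgroup hreg hKN (Subgroup.normal_of_index_eq_two hKidx) hK,
      hKidx]
  obtain rfl : X = orbitSubgroup K hK := hX
  refine ⟨fun hodd => ?_, fun _ => ?_⟩
  · exact DihedralGroup.coe_eq_dihedralX0 hindex (DihedralGroup.r_one_mem_of_odd hodd hindex)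
  · by_cases h1 : DihedralGroup.r 1 ∈ orbitSubgroup K hK
    · exact Or.inl (DihedralGroup.coe_eq_dihedralX0 hindex h1)
    · exact Or.inr (DihedralGroup.coe_eq_dihedralX1_or_dihedralX2 hindex h1)

/-- For `N ∈ R(D_n, [D_n])` with characteristic index-2 subgroup `K` and `X = K · 1`:
if `n` is odd then `X = X₀`; if `n` is even then `X ∈ {X₀, X₁, X₂}`. -/
theorem block_of_regular_dihedral (n : ℕ) (hn : 3 ≤ n)
    (N K : Subgroup (Equiv.Perm (DihedralGroup n))) (hN : IsDihedralHGS n N)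
    (hKN : K ≤ N) (hKidx : K.relIndex N = 2) (hKchar : (K.subgroupOf N).Characteristic)
    (X : Set (DihedralGroup n))
    (hX : X = (fun σ : Equiv.Perm (DihedralGroup n) => σ 1) '' (K : Set (Equiv.Perm (DihedralGroup n)))) :
    (Odd n → X = dihedralX0 n) ∧
    (Even n → X = dihedralX0 n ∨ X = dihedralX1 n ∨ X = dihedralX2 n) :=
  block_of_regular_dihedral_general n N K hN hKN hKidx hKchar X hX
end

section
/- For every integer n ≥ 3, the cardinality of ℋ(D_n) = { N ≤ Hol(D_n) : N regular, N ≅ D_n, Norm_B(N) = Hol(D_n) } equals the cardinality of T(D_n) = Norm_B(Hol(D_n))/Hol(D_n), and both equal |Υ_n|, the number of units of exponent 2 mod n. -/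
/-- The holomorph `Hol(G) = Norm_B(λ(G))` inside `B = Perm G`. -/
def holSubgroup (G : Type*) [Group G] : Subgroup (Equiv.Perm G) :=
  Subgroup.normalizer (leftRegRange G : Set (Equiv.Perm G))

/-- `ℋ(G)`: regular subgroups of `Hol(G)` isomorphic to `G` whose normalizer is `Hol(G)`. -/
def multHolClass (G : Type*) [Group G] : Set (Subgroup (Equiv.Perm G)) :=
  {N | N ≤ holSubgroup G ∧ IsRegularSubgroup N ∧ Nonempty (N ≃* G) ∧
    Subgroup.normalizer (N : Set (Equiv.Perm G)) = holSubgroup G}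

/-!
A regular subgroup `N ≅ G` of `Perm G` is a conjugate `φ λ(G) φ⁻¹` (transport `λ` along the orbit
map `N → G`, `ν ↦ ν 1`), and its normalizer is `φ Hol(G) φ⁻¹`. Hence `ℋ(G)` is the orbit of `λ(G)`
under conjugation by `Norm(Hol(G))`, with stabilizer `Hol(G)`, and `|ℋ(G)| = |T(G)|` for every `G`.

For `n ≥ 3`, `Hol(D_n) = λ(D_n) Aut(D_n)` consists of the maps that keep or exchange rotations and
reflections and are `t ↦ g t + const` on both, with one unit `g`. An element of `Norm(Hol(D_n))`
keeps or exchanges these two blocks: the pointwise stabilizer in `Hol(D_n)` of the rotations has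
`n` elements, that of a set containing a rotation and a reflection at most `φ(n) < n`. If it keeps
them, conjugating translations shows it is `r t ↦ r (a t + b)`, `sr t ↦ sr (c t + d)`, and
conjugating `λ(sr 0)` gives `c = u a` with `u² = 1`. So the cosets of `Hol(D_n)` in its normalizer
are represented exactly once each by the maps `r t ↦ r t`, `sr t ↦ sr (u t)` with `u ∈ Υ_n`.
-/

open Pointwise

section Holomorph

variable {Z : Type*}

theorem Subgroup.index_eq_card_of_fibers {G X : Type*} [Group G] (H : Subgroup G) (f : G → X)
    (hf : Function.Surjective f) (hfib : ∀ a b, f a = f b ↔ a⁻¹ * b ∈ H) :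
    H.index = Nat.card X := by
  refine Nat.card_eq_of_bijective (Quotient.lift f fun a b hab => (hfib a b).2 ?_) ⟨?_, ?_⟩
  · exact QuotientGroup.leftRel_apply.1 hab
  · rintro ⟨a⟩ ⟨b⟩ hab
    exact Quotient.sound (QuotientGroup.leftRel_apply.2 ((hfib a b).1 hab))
  · intro x
    obtain ⟨a, rfl⟩ := hf x
    exact ⟨QuotientGroup.mk a, rfl⟩

theorem Subgroup.normalizer_conj_smul {M : Type*} [Group M] (g : M) (H : Subgroup M) :
    Subgroup.normalizer ((MulAut.conj g • H : Subgroup M) : Set M) =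
      MulAut.conj g • Subgroup.normalizer (H : Set M) :=
  (Subgroup.map_equiv_normalizer_eq H (MulAut.conj g)).symm

theorem Subgroup.conj_smul_eq_self_iff {M : Type*} [Group M] {g : M} {H : Subgroup M} :
    MulAut.conj g • H = H ↔ g ∈ Subgroup.normalizer (H : Set M) :=
  Subgroup.conjAct_pointwise_smul_iff

theorem Subgroup.conj_smul_inf_fixingSubgroup {M α : Type*} [Group M] [MulAction M α]
    {H : Subgroup M} {g : M} (hg : g ∈ Subgroup.normalizer (H : Set M)) (s : Set α) :
    MulAut.conj g • (H ⊓ fixingSubgroup M s) = H ⊓ fixingSubgroup M (g • s) := by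
  rw [Subgroup.smul_inf, Subgroup.conj_smul_eq_self_iff.2 hg,
    SubMulAction.fixingSubgroup_smul_eq_fixingSubgroup_map_conj]
  rfl

theorem IsRegularSubgroup.conj_smul {N : Subgroup (Equiv.Perm Z)} (hN : IsRegularSubgroup N)
    (φ : Equiv.Perm Z) : IsRegularSubgroup (MulAut.conj φ • N) := by
  obtain ⟨htrans, hfree⟩ := hN
  constructor
  · intro z w
    obtain ⟨σ, hσ, hσz⟩ := htrans (φ⁻¹ z) (φ⁻¹ w)
    refine ⟨φ * σ * φ⁻¹, Subgroup.smul_mem_pointwise_smul σ _ _ hσ, ?_⟩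
    rw [Equiv.Perm.mul_apply, Equiv.Perm.mul_apply, hσz, ← Equiv.Perm.mul_apply, mul_inv_cancel,
      Equiv.Perm.one_apply]
  · intro σ hσ hσ1 z hz
    rw [Subgroup.mem_pointwise_smul_iff_inv_smul_mem] at hσ
    refine hfree _ hσ ?_ (φ⁻¹ z) ?_
    · simpa [MulAut.conj_apply, mul_assoc, inv_mul_eq_one, mul_eq_one_iff_eq_inv] using hσ1
    · simpa [MulAut.conj_apply, ← Equiv.Perm.inv_def, Equiv.Perm.inv_eq_iff_eq] using hz

theorem IsRegularSubgroup.bijective_apply_s14 {N : Subgroup (Equiv.Perm Z)} (hN : IsRegularSubgroup N)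
    (z : Z) : Function.Bijective fun ν : N => (ν : Equiv.Perm Z) z := by
  refine ⟨fun ν μ hνμ => ?_, fun w => ?_⟩
  · by_contra hne
    refine hN.2 _ (N.mul_mem (N.inv_mem μ.2) ν.2) ?_ z ?_
    · exact fun h => hne (Subtype.ext (inv_mul_eq_one.1 h).symm)
    · simp only at hνμ
      simp [hνμ]
  · obtain ⟨σ, hσ, hσz⟩ := hN.1 z w
    exact ⟨⟨σ, hσ⟩, hσz⟩

variable {G : Type*} [Group G]

theorem isRegularSubgroup_leftRegRange : IsRegularSubgroup (leftRegRange G) := by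
  refine ⟨fun z w => ⟨MulAction.toPerm (w * z⁻¹), ⟨_, rfl⟩, by simp⟩, ?_⟩
  rintro _ ⟨x, rfl⟩ hx z hz
  obtain rfl : x = 1 := by simpa using hz
  exact hx (map_one _)

theorem IsRegularSubgroup.exists_conj_smul_eq {N : Subgroup (Equiv.Perm G)}
    (hN : IsRegularSubgroup N) (f : N ≃* G) :
    ∃ φ : Equiv.Perm G, MulAut.conj φ • leftRegRange G = N := by
  let φ : Equiv.Perm G := f.symm.toEquiv.trans (Equiv.ofBijective _ (hN.bijective_apply_s14 1))
  have hφ : ∀ x, φ * MulAction.toPerm x = (f.symm x : Equiv.Perm G) * φ := by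
    intro x
    ext z
    simp [φ, map_mul]
  have hconj : ∀ x, MulAut.conj φ • MulAction.toPermHom G G x = f.symm x := fun x => by
    rw [MulAut.smul_def, MulAut.conj_apply, MulAction.toPermHom_apply, hφ, mul_inv_cancel_right]
  refine ⟨φ, le_antisymm ?_ fun σ hσ => ?_⟩
  · rintro _ ⟨_, ⟨x, rfl⟩, rfl⟩
    change MulAut.conj φ • MulAction.toPermHom G G x ∈ N
    exact hconj x ▸ (f.symm x).2
  · exact (Subgroup.mem_smul_pointwise_iff_exists _ _ _).2
      ⟨_, ⟨f ⟨σ, hσ⟩, rfl⟩, by rw [hconj, MulEquiv.symm_apply_apply]⟩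

theorem mem_multHolClass_iff {N : Subgroup (Equiv.Perm G)} :
    N ∈ multHolClass G ↔ ∃ φ ∈ Subgroup.normalizer (holSubgroup G : Set (Equiv.Perm G)),
      MulAut.conj φ • leftRegRange G = N := by
  constructor
  · rintro ⟨-, hreg, ⟨f⟩, hnorm⟩
    obtain ⟨φ, rfl⟩ := hreg.exists_conj_smul_eq f
    rw [Subgroup.normalizer_conj_smul] at hnorm
    exact ⟨φ, Subgroup.conj_smul_eq_self_iff.1 hnorm, rfl⟩
  · rintro ⟨φ, hφ, rfl⟩
    have hnorm : Subgroup.normalizer ((MulAut.conj φ • leftRegRange G : Subgroup _) :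
        Set (Equiv.Perm G)) = holSubgroup G := by
      rw [Subgroup.normalizer_conj_smul]
      exact Subgroup.conj_smul_eq_self_iff.2 hφ
    refine ⟨hnorm ▸ Subgroup.le_normalizer, isRegularSubgroup_leftRegRange.conj_smul φ,
      ⟨(Subgroup.equivSMul _ _).symm.trans
        (MonoidHom.ofInjective MulAction.toPerm_injective).symm⟩, hnorm⟩

theorem card_multHolClass (G : Type*) [Group G] :
    Nat.card (multHolClass G) =
      (holSubgroup G).relIndex (Subgroup.normalizer (holSubgroup G : Set (Equiv.Perm G))) := by
  refine (Subgroup.index_eq_card_of_fibers _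
    (fun φ => ⟨MulAut.conj (φ : Equiv.Perm G) • leftRegRange G,
      mem_multHolClass_iff.2 ⟨φ, φ.2, rfl⟩⟩)
    ?_ fun φ ψ => ?_).symm
  · rintro ⟨N, hN⟩
    obtain ⟨φ, hφ, rfl⟩ := mem_multHolClass_iff.1 hN
    exact ⟨⟨φ, hφ⟩, rfl⟩
  · rw [Subtype.mk.injEq, eq_comm, Subgroup.mem_subgroupOf, ← inv_smul_eq_iff, ← mul_smul,
      ← map_inv, ← map_mul, Subgroup.conj_smul_eq_self_iff]
    rfl

theorem toPerm_mem_holSubgroup (x : G) : MulAction.toPerm x ∈ holSubgroup G :=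
  Subgroup.le_normalizer ⟨x, rfl⟩

theorem MulEquiv.toEquiv_mem_holSubgroup (α : MulAut G) : α.toEquiv ∈ holSubgroup G := by
  have hconj : ∀ y, MulAut.conj α.toEquiv • MulAction.toPermHom G G y =
      MulAction.toPermHom G G (α y) := fun y => by
    ext z
    simp [MulAut.smul_def, MulAut.conj_apply, map_mul]
  rw [holSubgroup, ← Subgroup.conj_smul_eq_self_iff]
  refine le_antisymm ?_ fun σ hσ => ?_
  · rintro _ ⟨_, ⟨y, rfl⟩, rfl⟩
    exact ⟨α y, (hconj y).symm⟩
  · obtain ⟨w, rfl⟩ := hσ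
    exact (Subgroup.mem_smul_pointwise_iff_exists _ _ _).2
      ⟨_, ⟨α.symm w, rfl⟩, by rw [hconj, MulEquiv.apply_symm_apply]⟩

theorem map_mul_of_mem_holSubgroup {ψ : Equiv.Perm G} (hψ : ψ ∈ holSubgroup G) (h1 : ψ 1 = 1)
    (x y : G) : ψ (x * y) = ψ x * ψ y := by
  obtain ⟨w, hw⟩ := (Subgroup.mem_normalizer_iff.1 hψ _).1 ⟨x, rfl⟩
  have hw' : ψ * MulAction.toPerm x = MulAction.toPerm w * ψ := by
    simp only [← MulAction.toPermHom_apply, hw, inv_mul_cancel_right]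
  have hwx : w = ψ x := by simpa [h1] using congrArg (· 1) hw'.symm
  simpa [hwx] using congrArg (· y) hw'

theorem mem_holSubgroup_iff {ψ : Equiv.Perm G} :
    ψ ∈ holSubgroup G ↔
      ∃ x : G, ∃ α : MulAut G, ψ = MulAction.toPerm x * α.toEquiv := by
  constructor
  · intro hψ
    set ψ₀ := MulAction.toPerm (ψ 1)⁻¹ * ψ
    have hψ₀ : ψ₀ ∈ holSubgroup G := (holSubgroup G).mul_mem (toPerm_mem_holSubgroup _) hψ
    refine ⟨ψ 1, MulEquiv.mk' ψ₀ (map_mul_of_mem_holSubgroup hψ₀ (by simp [ψ₀])), ?_⟩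
    ext z
    show ψ z = ψ 1 * ψ₀ z
    simp [ψ₀]
  · rintro ⟨x, α, rfl⟩
    exact (holSubgroup G).mul_mem (toPerm_mem_holSubgroup x) α.toEquiv_mem_holSubgroup

end Holomorph

theorem ZMod.eq_add_mul_of_add_one {n : ℕ} [NeZero n] {f : ZMod n → ZMod n} {a : ZMod n}
    (h : ∀ t, f (t + 1) = f t + a) (t : ZMod n) : f t = f 0 + t * a := by
  rw [← ZMod.natCast_zmod_val t]
  induction t.val with
  | zero => simp
  | succ k ih => push_cast; rw [h, ih]; ring

namespace DihedralGroup

variable {n : ℕ}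

def affineAut (g : (ZMod n)ˣ) (h : ZMod n) : MulAut (DihedralGroup n) where
  toFun
    | r t => r (g * t)
    | sr t => sr (g * t + h)
  invFun
    | r t => r (↑g⁻¹ * t)
    | sr t => sr (↑g⁻¹ * (t - h))
  left_inv := by rintro (t | t) <;> simp
  right_inv := by rintro (t | t) <;> simp
  map_mul' := by rintro (s | s) (t | t) <;> simp only [r_mul_r, r_mul_sr, sr_mul_r, sr_mul_sr] <;>
    congr 1 <;> ring

@[simp] theorem affineAut_r (g : (ZMod n)ˣ) (h t : ZMod n) :
    affineAut g h (r t) = r ((g : ZMod n) * t) := rfl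

@[simp] theorem affineAut_sr (g : (ZMod n)ˣ) (h t : ZMod n) :
    affineAut g h (sr t) = sr ((g : ZMod n) * t + h) := rfl

theorem exists_eq_affineAut (hn : 3 ≤ n) (α : MulAut (DihedralGroup n)) :
    ∃ g h, α = affineAut g h := by
  have : NeZero n := ⟨by omega⟩
  obtain ⟨g, hg⟩ : ∃ g, α (r 1) = r g := by
    rcases hα : α (r 1) with g | j
    · exact ⟨g, rfl⟩
    · have := α.orderOf_eq (r 1)
      rw [hα, orderOf_sr, orderOf_r_one] at this
      omega
  have hαr : ∀ t, α (r t) = r (g * t) := fun t => by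
    rw [← ZMod.natCast_zmod_val t, ← r_one_pow, map_pow, hg, r_pow]
  have hgu : IsUnit g := IsLeftRegular.isUnit_of_finite fun s t hst => by
    simpa using α.injective ((hαr s).trans ((congrArg r hst).trans (hαr t).symm))
  obtain ⟨h, hh⟩ : ∃ h, α (sr 0) = sr h := by
    rcases hα : α (sr 0) with j | h
    · exfalso
      have hrot : ∀ x, ∃ t, α x = r t := by
        rintro (t | t)
        · exact ⟨_, hαr t⟩
        · refine ⟨j + g * t, ?_⟩
          rw [← zero_add t, ← sr_mul_r, map_mul, hα, hαr, r_mul_r, zero_add]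
      obtain ⟨x, hx⟩ := α.surjective (sr 0)
      obtain ⟨t, ht⟩ := hrot x
      exact absurd (hx.symm.trans ht) (by simp)
    · exact ⟨h, rfl⟩
  refine ⟨hgu.unit, h, MulEquiv.ext ?_⟩
  rintro (t | t)
  · simp [hαr]
  · rw [← zero_add t, ← sr_mul_r, map_mul, hh, hαr]
    simp [add_comm]

def holPerm (ε : Bool) (g : (ZMod n)ˣ) (a c : ZMod n) : Equiv.Perm (DihedralGroup n) :=
  MulAction.toPerm (cond ε (sr a) (r a)) * (affineAut g (a + c)).toEquiv

@[simp] theorem holPerm_false_r (g : (ZMod n)ˣ) (a c t : ZMod n) :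
    holPerm false g a c (r t) = r ((g : ZMod n) * t + a) := by
  simp [holPerm, add_comm]

@[simp] theorem holPerm_false_sr (g : (ZMod n)ˣ) (a c t : ZMod n) :
    holPerm false g a c (sr t) = sr ((g : ZMod n) * t + c) := by
  simp [holPerm]; ring

@[simp] theorem holPerm_true_r (g : (ZMod n)ˣ) (a c t : ZMod n) :
    holPerm true g a c (r t) = sr ((g : ZMod n) * t + a) := by
  simp [holPerm, add_comm]

@[simp] theorem holPerm_true_sr (g : (ZMod n)ˣ) (a c t : ZMod n) :
    holPerm true g a c (sr t) = r ((g : ZMod n) * t + c) := by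
  simp [holPerm]; ring

theorem holPerm_mem_holSubgroup (ε : Bool) (g : (ZMod n)ˣ) (a c : ZMod n) :
    holPerm ε g a c ∈ holSubgroup (DihedralGroup n) :=
  mem_holSubgroup_iff.2 ⟨_, _, rfl⟩

theorem mem_holSubgroup_iff_exists_holPerm (hn : 3 ≤ n) {ψ : Equiv.Perm (DihedralGroup n)} :
    ψ ∈ holSubgroup (DihedralGroup n) ↔ ∃ ε g a c, ψ = holPerm ε g a c := by
  refine ⟨fun hψ => ?_, fun ⟨ε, g, a, c, hψ⟩ => hψ ▸ holPerm_mem_holSubgroup ε g a c⟩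
  obtain ⟨x, α, rfl⟩ := mem_holSubgroup_iff.1 hψ
  obtain ⟨g, h, rfl⟩ := exists_eq_affineAut hn α
  rcases x with a | a
  · exact ⟨false, g, a, h - a, by rw [holPerm, add_sub_cancel]; rfl⟩
  · exact ⟨true, g, a, h - a, by rw [holPerm, add_sub_cancel]; rfl⟩

theorem holPerm_apply_r_eq_self_iff {ε : Bool} {g : (ZMod n)ˣ} {a c p : ZMod n} :
    holPerm ε g a c (r p) = r p ↔ ε = false ∧ a = p - g * p := by
  cases ε
  · simp only [holPerm_false_r, r.injEq, true_and]
    exact ⟨fun h => by linear_combination h, fun h => by linear_combination h⟩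
  · simp

theorem holPerm_apply_sr_eq_self_iff {ε : Bool} {g : (ZMod n)ˣ} {a c q : ZMod n} :
    holPerm ε g a c (sr q) = sr q ↔ ε = false ∧ c = q - g * q := by
  cases ε
  · simp only [holPerm_false_sr, sr.injEq, true_and]
    exact ⟨fun h => by linear_combination h, fun h => by linear_combination h⟩
  · simp

def rotations (n : ℕ) : Set (DihedralGroup n) := Set.range r

theorem compl_rotations : (rotations n)ᶜ = Set.range sr := by
  ext (t | t) <;> simp [rotations]

theorem ncard_rotations [NeZero n] : (rotations n).ncard = n := by
  rw [rotations, Set.ncard_range_of_injective fun _ _ => r.inj, Nat.card_zmod]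

theorem ncard_compl_rotations [NeZero n] : (rotations n)ᶜ.ncard = n := by
  rw [compl_rotations, Set.ncard_range_of_injective fun _ _ => sr.inj, Nat.card_zmod]

local notation "Hol" => holSubgroup (DihedralGroup n)

local notation "Fix" => fixingSubgroup (Equiv.Perm (DihedralGroup n))

theorem mem_inf_fixingSubgroup_rotations (hn : 3 ≤ n) {σ : Equiv.Perm (DihedralGroup n)} :
    σ ∈ Hol ⊓ Fix (rotations n) ↔ ∃ c, σ = holPerm false 1 0 c := by
  constructor
  · intro hσ
    obtain ⟨hσ, hfix⟩ := Subgroup.mem_inf.1 hσ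
    obtain ⟨ε, g, a, c, rfl⟩ := (mem_holSubgroup_iff_exists_holPerm hn).1 hσ
    rw [mem_fixingSubgroup_iff] at hfix
    obtain ⟨rfl, ha₀⟩ := holPerm_apply_r_eq_self_iff.1 (hfix (r 0) ⟨0, rfl⟩)
    obtain ⟨-, ha₁⟩ := holPerm_apply_r_eq_self_iff.1 (hfix (r 1) ⟨1, rfl⟩)
    obtain rfl : g = 1 := Units.ext (by rw [Units.val_one]; linear_combination ha₁ - ha₀)
    obtain rfl : a = 0 := by simpa using ha₀
    exact ⟨c, rfl⟩
  · rintro ⟨c, rfl⟩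
    exact ⟨holPerm_mem_holSubgroup _ _ _ _, (mem_fixingSubgroup_iff _).2 <| by
      rintro _ ⟨t, rfl⟩
      simp [Equiv.Perm.smul_def]⟩

theorem mem_inf_fixingSubgroup_compl_rotations (hn : 3 ≤ n) {σ : Equiv.Perm (DihedralGroup n)} :
    σ ∈ Hol ⊓ Fix (rotations n)ᶜ ↔ ∃ a, σ = holPerm false 1 a 0 := by
  rw [compl_rotations]
  constructor
  · intro hσ
    obtain ⟨hσ, hfix⟩ := Subgroup.mem_inf.1 hσ
    obtain ⟨ε, g, a, c, rfl⟩ := (mem_holSubgroup_iff_exists_holPerm hn).1 hσ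
    rw [mem_fixingSubgroup_iff] at hfix
    obtain ⟨rfl, hc₀⟩ := holPerm_apply_sr_eq_self_iff.1 (hfix (sr 0) ⟨0, rfl⟩)
    obtain ⟨-, hc₁⟩ := holPerm_apply_sr_eq_self_iff.1 (hfix (sr 1) ⟨1, rfl⟩)
    obtain rfl : g = 1 := Units.ext (by rw [Units.val_one]; linear_combination hc₁ - hc₀)
    obtain rfl : c = 0 := by simpa using hc₀
    exact ⟨a, rfl⟩
  · rintro ⟨a, rfl⟩
    exact ⟨holPerm_mem_holSubgroup _ _ _ _, (mem_fixingSubgroup_iff _).2 <| by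
      rintro _ ⟨t, rfl⟩
      simp [Equiv.Perm.smul_def]⟩

theorem card_inf_fixingSubgroup_rotations (hn : 3 ≤ n) :
    Nat.card (Hol ⊓ Fix (rotations n) : Subgroup _) = n := by
  have : NeZero n := ⟨by omega⟩
  let K := Hol ⊓ Fix (rotations n)
  refine (Nat.card_eq_of_bijective (fun c : ZMod n =>
    (⟨holPerm false 1 0 c, (mem_inf_fixingSubgroup_rotations hn).2 ⟨c, rfl⟩⟩ : K))
    ⟨fun c c' h => ?_, ?_⟩).symm.trans (Nat.card_zmod n)
  · simpa using congrArg (fun σ : K => σ.1 (sr 0)) h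
  · rintro ⟨σ, hσ⟩
    obtain ⟨c, rfl⟩ := (mem_inf_fixingSubgroup_rotations hn).1 hσ
    exact ⟨c, rfl⟩

theorem card_inf_fixingSubgroup_lt (hn : 3 ≤ n) {S : Set (DihedralGroup n)} {p q : ZMod n}
    (hp : r p ∈ S) (hq : sr q ∈ S) : Nat.card (Hol ⊓ Fix S : Subgroup _) < n := by
  have : NeZero n := ⟨by omega⟩
  let K := Hol ⊓ Fix {r p, sr q}
  have hK : ∀ g : (ZMod n)ˣ, holPerm false g (p - g * p) (q - g * q) ∈ K := fun g =>
    ⟨holPerm_mem_holSubgroup _ _ _ _, (mem_fixingSubgroup_iff _).2 <| by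
      rintro _ (rfl | rfl)
      · exact holPerm_apply_r_eq_self_iff.2 ⟨rfl, rfl⟩
      · exact holPerm_apply_sr_eq_self_iff.2 ⟨rfl, rfl⟩⟩
  have hsurj : Function.Surjective fun g => (⟨_, hK g⟩ : K) := by
    rintro ⟨σ, hσ⟩
    obtain ⟨hσ, hfix⟩ := Subgroup.mem_inf.1 hσ
    obtain ⟨ε, g, a, c, rfl⟩ := (mem_holSubgroup_iff_exists_holPerm hn).1 hσ
    rw [mem_fixingSubgroup_iff] at hfix
    obtain ⟨rfl, rfl⟩ := holPerm_apply_r_eq_self_iff.1 (hfix (r p) (by simp))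
    obtain ⟨-, rfl⟩ := holPerm_apply_sr_eq_self_iff.1 (hfix (sr q) (by simp))
    exact ⟨g, rfl⟩
  calc Nat.card (Hol ⊓ Fix S : Subgroup _)
      ≤ Nat.card K := Subgroup.card_le_of_le <|
        inf_le_inf_left _ (fixingSubgroup_antitone _ _ (Set.insert_subset hp (by simpa)))
    _ ≤ Nat.card (ZMod n)ˣ := Nat.card_le_card_of_surjective _ hsurj
    _ < n := by
      rw [Nat.card_eq_fintype_card, ZMod.card_units_eq_totient]
      exact Nat.totient_lt n (by omega)

theorem smul_rotations_eq_or (hn : 3 ≤ n) {ψ : Equiv.Perm (DihedralGroup n)}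
    (hψ : ψ ∈ Subgroup.normalizer (Hol : Set (Equiv.Perm (DihedralGroup n)))) :
    ψ • rotations n = rotations n ∨ ψ • rotations n = (rotations n)ᶜ := by
  have : NeZero n := ⟨by omega⟩
  have hcard : Nat.card (Hol ⊓ Fix (ψ • rotations n) : Subgroup _) = n := by
    rw [← Subgroup.conj_smul_inf_fixingSubgroup hψ]
    exact (Nat.card_congr (Subgroup.equivSMul _ _).toEquiv).symm.trans
      (card_inf_fixingSubgroup_rotations hn)
  have hncard : (ψ • rotations n).ncard = n := by rw [Set.ncard_smul_set, ncard_rotations]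
  by_cases hsub : ψ • rotations n ⊆ rotations n
  · exact .inl (Set.eq_of_subset_of_ncard_le hsub (by rw [hncard, ncard_rotations]))
  · obtain ⟨x, hx, hxR⟩ := Set.not_subset.1 hsub
    rw [← Set.mem_compl_iff, compl_rotations] at hxR
    obtain ⟨q, rfl⟩ := hxR
    refine .inr (Set.eq_of_subset_of_ncard_le (fun y hy => ?_)
      (by rw [hncard, ncard_compl_rotations]))
    rintro ⟨p, rfl⟩
    exact (card_inf_fixingSubgroup_lt hn hy hx).ne hcard

theorem toPerm_sr_zero_smul_rotations :
    (MulAction.toPerm (sr (0 : ZMod n)) : Equiv.Perm (DihedralGroup n)) • rotations n =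
      (rotations n)ᶜ := by
  rw [compl_rotations]
  ext x
  constructor
  · rintro ⟨_, ⟨t, rfl⟩, rfl⟩
    exact ⟨t, by simp [Equiv.Perm.smul_def]⟩
  · rintro ⟨t, rfl⟩
    exact ⟨r t, ⟨t, rfl⟩, by simp [Equiv.Perm.smul_def]⟩

theorem exists_apply_r_eq (hn : 3 ≤ n) {ψ : Equiv.Perm (DihedralGroup n)}
    (hψ : ψ ∈ Subgroup.normalizer (Hol : Set (Equiv.Perm (DihedralGroup n))))
    (hR : ψ • rotations n = rotations n) :
    ∃ (a : (ZMod n)ˣ) (b : ZMod n), ∀ t, ψ (r t) = r ((a : ZMod n) * t + b) := by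
  have : NeZero n := ⟨by omega⟩
  -- conjugation by `ψ` preserves the translations of the rotations (`Hol` fixing all reflections)
  obtain ⟨a, ha⟩ : ∃ a, ψ * holPerm false 1 1 0 * ψ⁻¹ = holPerm false 1 a 0 := by
    have := Subgroup.smul_mem_pointwise_smul _ (MulAut.conj ψ) _
      ((mem_inf_fixingSubgroup_compl_rotations hn).2 ⟨1, rfl⟩)
    rw [Subgroup.conj_smul_inf_fixingSubgroup hψ, Set.smul_set_compl, hR] at this
    exact (mem_inf_fixingSubgroup_compl_rotations hn).1 this
  choose A hA using fun t =>
    (hR ▸ Set.smul_mem_smul_set ⟨t, rfl⟩ : ψ • r t ∈ rotations n)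
  replace hA : ∀ t, ψ (r t) = r (A t) := fun t => (hA t).symm
  have hstep : ∀ t, A (t + 1) = A t + a := fun t => by
    have := congrArg (· (ψ (r t))) ha
    simp only [Equiv.Perm.mul_apply, Equiv.Perm.coe_inv, Equiv.symm_apply_apply] at this
    simpa [hA, add_comm] using this
  have haff := ZMod.eq_add_mul_of_add_one hstep
  have hunit : IsUnit a := IsRightRegular.isUnit_of_finite fun s t hst => by
    have : ψ (r s) = ψ (r t) := by
      rw [hA, hA, haff s, haff t]
      exact congrArg (fun x => r (A 0 + x)) hst
    simpa using ψ.injective this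
  exact ⟨hunit.unit, A 0, fun t => by rw [hA, haff, IsUnit.unit_spec, add_comm, mul_comm]⟩

theorem exists_apply_sr_eq (hn : 3 ≤ n) {ψ : Equiv.Perm (DihedralGroup n)}
    (hψ : ψ ∈ Subgroup.normalizer (Hol : Set (Equiv.Perm (DihedralGroup n))))
    (hR : ψ • rotations n = rotations n) :
    ∃ (c : (ZMod n)ˣ) (d : ZMod n), ∀ t, ψ (sr t) = sr ((c : ZMod n) * t + d) := by
  set ρ : Equiv.Perm (DihedralGroup n) := MulAction.toPerm (sr (0 : ZMod n))
  have hρ : ρ ∈ Subgroup.normalizer (Hol : Set (Equiv.Perm (DihedralGroup n))) :=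
    Subgroup.le_normalizer (toPerm_mem_holSubgroup _)
  have hρR : (ρ * ψ * ρ) • rotations n = rotations n := by
    rw [mul_smul, mul_smul, toPerm_sr_zero_smul_rotations, Set.smul_set_compl, hR,
      Set.smul_set_compl, toPerm_sr_zero_smul_rotations, compl_compl]
  obtain ⟨c, d, h⟩ := exists_apply_r_eq hn (mul_mem (mul_mem hρ hψ) hρ) hρR
  refine ⟨c, d, fun t => ?_⟩
  have := congrArg (sr (0 : ZMod n) * ·) (h t)
  simp only [Equiv.Perm.mul_apply, ρ, MulAction.toPerm_apply, smul_eq_mul, sr_mul_r, zero_add,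
    ← mul_assoc, sr_mul_self, one_mul] at this
  exact this

def scaleSr : (ZMod n)ˣ →* Equiv.Perm (DihedralGroup n) where
  toFun u :=
    { toFun
        | r t => r t
        | sr t => sr (u * t)
      invFun
        | r t => r t
        | sr t => sr (↑u⁻¹ * t)
      left_inv := by rintro (t | t) <;> simp
      right_inv := by rintro (t | t) <;> simp }
  map_one' := by ext (t | t) <;> simp
  map_mul' u v := by ext (t | t) <;> simp [mul_assoc]

@[simp] theorem scaleSr_r (u : (ZMod n)ˣ) (t : ZMod n) : scaleSr u (r t) = r t := rfl

@[simp] theorem scaleSr_sr (u : (ZMod n)ˣ) (t : ZMod n) :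
    scaleSr u (sr t) = sr ((u : ZMod n) * t) := rfl

theorem scaleSr_mem_normalizer (hn : 3 ≤ n) {u : (ZMod n)ˣ} (hu : u ^ 2 = 1) :
    scaleSr u ∈ Subgroup.normalizer (Hol : Set (Equiv.Perm (DihedralGroup n))) := by
  have : NeZero n := ⟨by omega⟩
  have hu' : (u : ZMod n) * u = 1 := by rw [← Units.val_mul, ← sq, hu, Units.val_one]
  refine Subgroup.mem_normalizer_fintype fun σ hσ => ?_
  obtain ⟨ε, g, a, c, rfl⟩ := (mem_holSubgroup_iff_exists_holPerm hn).1 hσ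
  rw [SetLike.mem_coe, ← map_inv, inv_eq_of_mul_eq_one_right (by rwa [← sq])]
  cases ε
  · convert holPerm_mem_holSubgroup false g a (u * c) using 1
    ext (t | t)
    · simp
    · simp; linear_combination (g * t : ZMod n) * hu'
  · convert holPerm_mem_holSubgroup true (u * g) (u * a) c using 1
    ext (t | t)
    · simp; ring
    · simp; ring

theorem scaleSr_mem_holSubgroup_iff (hn : 3 ≤ n) {u : (ZMod n)ˣ} :
    scaleSr u ∈ Hol ↔ u = 1 := by
  refine ⟨fun h => ?_, fun h => h ▸ (map_one scaleSr).symm ▸ one_mem _⟩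
  obtain ⟨c, hc⟩ := (mem_inf_fixingSubgroup_rotations hn).1
    ⟨h, (mem_fixingSubgroup_iff _).2 (by rintro _ ⟨t, rfl⟩; rfl)⟩
  have h0 := congrArg (· (sr 0)) hc
  have h1 := congrArg (· (sr 1)) hc
  simp only [scaleSr_sr, holPerm_false_sr, mul_zero, Units.val_one, mul_one, zero_add,
    sr.injEq] at h0 h1
  exact Units.ext (by rw [h1, ← h0, add_zero, Units.val_one])

theorem exists_scaleSr_inv_mul_mem_of_smul_rotations (hn : 3 ≤ n)
    {ψ : Equiv.Perm (DihedralGroup n)}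
    (hψ : ψ ∈ Subgroup.normalizer (Hol : Set (Equiv.Perm (DihedralGroup n))))
    (hR : ψ • rotations n = rotations n) :
    ∃ u : (ZMod n)ˣ, u ^ 2 = 1 ∧ (scaleSr u)⁻¹ * ψ ∈ Hol := by
  obtain ⟨a, b, hr⟩ := exists_apply_r_eq hn hψ hR
  obtain ⟨c, d, hsr⟩ := exists_apply_sr_eq hn hψ hR
  -- `ψ λ(sr 0) ψ⁻¹ ∈ Hol` swaps the two affine blocks, which forces `c = g a` and `a = g c`.
  obtain ⟨ε, g, a₂, c₂, hconj⟩ := (mem_holSubgroup_iff_exists_holPerm hn).1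
    ((Subgroup.mem_normalizer_iff.1 hψ (MulAction.toPerm (sr 0))).1 (toPerm_mem_holSubgroup _))
  have h₁ : ∀ t, holPerm ε g a₂ c₂ (r ((a : ZMod n) * t + b)) =
      sr ((c : ZMod n) * t + d) := fun t => by simp [← hconj, ← hr, hsr]
  have h₂ : ∀ t, holPerm ε g a₂ c₂ (sr ((c : ZMod n) * t + d)) =
      r ((a : ZMod n) * t + b) := fun t => by simp [← hconj, ← hr, ← hsr]
  cases ε
  · simpa using h₁ 0
  have hga : g * a = c := Units.ext (by
    rw [Units.val_mul]
    have e₀ := h₁ 0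
    have e₁ := h₁ 1
    simp only [holPerm_true_r, sr.injEq] at e₀ e₁
    linear_combination e₁ - e₀)
  have hgc : g * c = a := Units.ext (by
    rw [Units.val_mul]
    have e₀ := h₂ 0
    have e₁ := h₂ 1
    simp only [holPerm_true_sr, r.injEq] at e₀ e₁
    linear_combination e₁ - e₀)
  refine ⟨g, mul_right_cancel (b := a) (by rw [sq, mul_assoc, hga, hgc, one_mul]), ?_⟩
  rw [← map_inv]
  convert holPerm_mem_holSubgroup false a b (↑g⁻¹ * d) using 1
  ext (t | t)
  · simp only [Equiv.Perm.mul_apply, hr, scaleSr_r, holPerm_false_r]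
  · simp only [Equiv.Perm.mul_apply, hsr, scaleSr_sr, holPerm_false_sr, ← hga, Units.val_mul]
    rw [mul_add, ← mul_assoc, ← mul_assoc, Units.inv_mul, one_mul]

theorem exists_scaleSr_inv_mul_mem (hn : 3 ≤ n) {ψ : Equiv.Perm (DihedralGroup n)}
    (hψ : ψ ∈ Subgroup.normalizer (Hol : Set (Equiv.Perm (DihedralGroup n)))) :
    ∃ u : (ZMod n)ˣ, u ^ 2 = 1 ∧ (scaleSr u)⁻¹ * ψ ∈ Hol := by
  rcases smul_rotations_eq_or hn hψ with hR | hR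
  · exact exists_scaleSr_inv_mul_mem_of_smul_rotations hn hψ hR
  set ρ : Equiv.Perm (DihedralGroup n) := MulAction.toPerm (sr (0 : ZMod n))
  have hρ : ρ ∈ Hol := toPerm_mem_holSubgroup _
  obtain ⟨u, hu, h⟩ := exists_scaleSr_inv_mul_mem_of_smul_rotations hn
    (mul_mem (Subgroup.le_normalizer hρ) hψ)
    (by rw [mul_smul, hR, Set.smul_set_compl, toPerm_sr_zero_smul_rotations, compl_compl])
  have hconj : (scaleSr u)⁻¹ * ρ⁻¹ * scaleSr u ∈ Hol := by
    simpa using (Subgroup.mem_normalizer_iff.1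
      (inv_mem (scaleSr_mem_normalizer hn hu)) ρ⁻¹).1 (inv_mem hρ)
  refine ⟨u, hu, ?_⟩
  convert mul_mem hconj h using 1
  group

theorem relIndex_holSubgroup_normalizer (hn : 3 ≤ n) :
    (Hol).relIndex (Subgroup.normalizer (Hol : Set (Equiv.Perm (DihedralGroup n)))) =
      upsilonCard n := by
  refine (Nat.card_eq_of_bijective (fun u : {u : (ZMod n)ˣ // u ^ 2 = 1} =>
    (QuotientGroup.mk ⟨scaleSr u.1, scaleSr_mem_normalizer hn u.2⟩ : _ ⧸ (Hol).subgroupOf _))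
    ⟨fun u v huv => ?_, fun ψ => ?_⟩).symm
  · rw [QuotientGroup.eq, Subgroup.mem_subgroupOf] at huv
    simp only [Subgroup.coe_mul, Subgroup.coe_inv, ← map_inv, ← map_mul,
      scaleSr_mem_holSubgroup_iff hn, inv_mul_eq_one] at huv
    exact Subtype.ext huv
  · obtain ⟨⟨ψ, hψ⟩, rfl⟩ := QuotientGroup.mk_surjective ψ
    obtain ⟨u, hu, h⟩ := exists_scaleSr_inv_mul_mem hn hψ
    exact ⟨⟨u, hu⟩, QuotientGroup.eq.2 h⟩

end DihedralGroup

/-- `|ℋ(D_n)| = |T(D_n)| = |Υ_n|`. -/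
theorem card_multHol_dihedral (n : ℕ) (hn : 3 ≤ n) :
    Nat.card (multHolClass (DihedralGroup n)) =
      (holSubgroup (DihedralGroup n)).relIndex
        (Subgroup.normalizer (holSubgroup (DihedralGroup n) : Set (Equiv.Perm (DihedralGroup n)))) ∧
    (holSubgroup (DihedralGroup n)).relIndex
        (Subgroup.normalizer (holSubgroup (DihedralGroup n) : Set (Equiv.Perm (DihedralGroup n)))) =
      upsilonCard n :=
  ⟨card_multHolClass _, DihedralGroup.relIndex_holSubgroup_normalizer hn⟩
end

section
/- Let n = 2m be even with m ≥ 3, let C_n = ⟨σ⟩ be a cyclic group of order n acting on itself by left translation inside Perm(C_n), and let Hol(C_n) = Norm_{Perm(C_n)}(⟨σ⟩). Then Hol(C_n) contains exactly one regular subgroup D isomorphic to the dihedral group D_m = ⟨r, f | r^m = f² = 1, r f = f r^{-1}⟩ whose index-2 cyclic subgroup ⟨r⟩ of order m centralizes σ; moreover, for this D, every element f of D outside ⟨r⟩ satisfies f σ f^{-1} = σ^{-1}. -/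
/-- The property of being the distinguished regular dihedral subgroup of `Hol(C_n)`:
regular, isomorphic to `D_m`, contained in `Norm(⟨σ⟩)`, with an index-2 cyclic
subgroup of order `m` centralizing `σ`. -/
def IsGoodDihedral (m : ℕ) {C : Type*} [Group C] (σ : Equiv.Perm C)
    (D : Subgroup (Equiv.Perm C)) : Prop :=
  D ≤ Subgroup.normalizer (Subgroup.zpowers σ : Set (Equiv.Perm C)) ∧ IsRegularSubgroup D ∧
    Nonempty (D ≃* DihedralGroup m) ∧
    ∃ K : Subgroup (Equiv.Perm C), K ≤ D ∧ IsCyclic K ∧ Nat.card K = m ∧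
      K.relIndex D = 2 ∧ ∀ ρ ∈ K, ρ * σ = σ * ρ

/-!
Write `σ` for translation by the generator `c`. The centralizer of `σ` in `Perm C` is `⟨σ⟩`, so
a subgroup `K` of order `m` commuting with `σ` is `⟨σ²⟩`. For `m ≥ 3` a cyclic subgroup of
order `m` of `D_m` is its rotation subgroup, so every `f ∈ D \ K` is an involution inverting
`σ²`. As `f` normalizes `⟨σ⟩`, `f σ f⁻¹ = σ ^ j` with `m ∣ j + 1`, and `f` is the affine map
`y ↦ y ^ j * f 1`. If `j ≡ m - 1 (mod 2m)`, then `f² = 1` forces `f 1` to be a square, so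
`D = K ∪ f K` preserves the squares of `C`, contradicting transitivity; hence `j ≡ -1`.
The same parity argument shows that all reflections `y ↦ y⁻¹ * a` in such a `D` have `a` a
non-square, which determines `D`. Conversely `⟨σ²⟩` together with `y ↦ c * y⁻¹` is a regular
copy of `D_m`.
-/

open Subgroup

theorem zpow_cast_intCast_of_pow_eq_one {G : Type*} [Group G] {n : ℕ} {ρ : G} (hρ : ρ ^ n = 1)
    (a : ℤ) : ρ ^ ((a : ZMod n).cast : ℤ) = ρ ^ a := by
  rw [ZMod.coe_intCast, eq_comm, ← zpow_mod_orderOf,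
    ← Int.emod_emod_of_dvd a (Int.natCast_dvd_natCast.2 (orderOf_dvd_of_pow_eq_one hρ)),
    zpow_mod_orderOf]

namespace DihedralGroup

variable {n : ℕ} {G : Type*} [Group G]

def lift (ρ ι : G) (hρ : ρ ^ n = 1) (hι : ι * ι = 1) (hιρ : ι * ρ * ι⁻¹ = ρ⁻¹) :
    DihedralGroup n →* G where
  toFun
    | r i => ρ ^ (i.cast : ℤ)
    | sr i => ι * ρ ^ (i.cast : ℤ)
  map_one' := by
    show ρ ^ ((0 : ZMod n).cast : ℤ) = 1
    rw [ZMod.cast_zero, zpow_zero]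
  map_mul' := by
    have hswap (k : ℤ) : ρ ^ k * ι = ι * ρ ^ (-k) := by
      rw [zpow_neg, ← inv_zpow, ← hιρ, conj_zpow, inv_eq_of_mul_eq_one_right hι, ← mul_assoc,
        ← mul_assoc, hι, one_mul]
    rintro (i | i) (j | j) <;>
      obtain ⟨a, rfl⟩ : ∃ a : ℤ, (a : ZMod n) = i := ⟨_, ZMod.intCast_zmod_cast i⟩ <;>
      obtain ⟨b, rfl⟩ : ∃ b : ℤ, (b : ZMod n) = j := ⟨_, ZMod.intCast_zmod_cast j⟩ <;>
      simp only [r_mul_r, r_mul_sr, sr_mul_r, sr_mul_sr, ← Int.cast_add, ← Int.cast_sub,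
        zpow_cast_intCast_of_pow_eq_one hρ]
    · rw [zpow_add]
    · rw [← mul_assoc, hswap, mul_assoc, ← zpow_add, sub_eq_neg_add]
    · rw [zpow_add, mul_assoc]
    · rw [mul_assoc, ← mul_assoc (ρ ^ a), hswap, ← mul_assoc, ← mul_assoc, hι, one_mul,
        ← zpow_add, sub_eq_neg_add]

section Lift

variable {ρ ι : G} {hρ : ρ ^ n = 1} {hι : ι * ι = 1} {hιρ : ι * ρ * ι⁻¹ = ρ⁻¹}

@[simp]
theorem lift_r_intCast (k : ℤ) : lift ρ ι hρ hι hιρ (r k) = ρ ^ k :=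
  zpow_cast_intCast_of_pow_eq_one hρ k

@[simp]
theorem lift_sr_intCast (k : ℤ) : lift ρ ι hρ hι hιρ (sr k) = ι * ρ ^ k :=
  congrArg (ι * ·) (zpow_cast_intCast_of_pow_eq_one hρ k)

end Lift

theorem r_mem_zpowers_r_one (i : ZMod n) : r i ∈ zpowers (r 1) := by
  obtain ⟨a, rfl⟩ : ∃ a : ℤ, (a : ZMod n) = i := ⟨_, ZMod.intCast_zmod_cast i⟩
  exact ⟨a, r_one_zpow a⟩

theorem eq_zpowers_r_one_of_isCyclic (hn : 3 ≤ n) {H : Subgroup (DihedralGroup n)}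
    [IsCyclic H] (hH : Nat.card H = n) : H = zpowers (r 1) := by
  have : NeZero n := ⟨by omega⟩
  obtain ⟨g, rfl⟩ := (H.isCyclic_iff_exists_zpowers_eq_top).1 ‹_›
  rw [Nat.card_zpowers] at hH
  refine eq_of_le_of_card_ge ?_ (by rw [Nat.card_zpowers, Nat.card_zpowers, orderOf_r_one, hH])
  rcases g with i | i
  · exact zpowers_le.2 (r_mem_zpowers_r_one i)
  · rw [orderOf_sr] at hH
    omega

theorem mul_self_eq_one_and_conj_eq_inv_of_mulEquiv (hn : 3 ≤ n) (e : G ≃* DihedralGroup n)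
    {H : Subgroup G} [IsCyclic H] (hH : Nat.card H = n) {x : G} (hx : x ∉ H) :
    x * x = 1 ∧ ∀ y ∈ H, x * y * x⁻¹ = y⁻¹ := by
  have : IsCyclic (H.map e.toMonoidHom) :=
    (MulEquiv.isCyclic (H.equivMapOfInjective _ e.injective)).1 ‹_›
  have hHe : H.map e.toMonoidHom = zpowers (r 1) :=
    eq_zpowers_r_one_of_isCyclic hn (by rw [card_map_of_injective e.injective, hH])
  obtain ⟨i, hi⟩ : ∃ i, e x = sr i := by
    rcases hex : e x with i | i
    · rw [← mem_map_iff_mem e.injective (f := e.toMonoidHom)] at hx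
      exact absurd (hHe ▸ hex ▸ r_mem_zpowers_r_one i) hx
    · exact ⟨i, rfl⟩
  refine ⟨e.injective ?_, fun y hy => e.injective ?_⟩
  · rw [map_mul, hi, sr_mul_self, map_one]
  · obtain ⟨k, hk⟩ := mem_zpowers_iff.1 (hHe ▸ mem_map_of_mem e.toMonoidHom hy)
    rw [r_one_zpow, MulEquiv.coe_toMonoidHom] at hk
    rw [map_mul, map_mul, map_inv, map_inv, hi, ← hk, inv_sr, sr_mul_r, sr_mul_sr, inv_r]
    congr 1
    ring

end DihedralGroup

open MulAction Equiv Set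

section Parity

variable {G : Type*} [Group G] {g : G}

theorem zpow_mem_zpowers_sq_iff (hg : Even (orderOf g)) {a : ℤ} :
    g ^ a ∈ zpowers (g ^ 2) ↔ Even a := by
  constructor
  · intro h
    obtain ⟨k, hk⟩ := mem_zpowers_iff.1 h
    rw [← zpow_natCast, ← zpow_mul, zpow_eq_zpow_iff_modEq] at hk
    have h2 : (2 : ℤ) ∣ a - 2 * k :=
      (Int.natCast_dvd_natCast.2 (even_iff_two_dvd.1 hg)).trans hk.dvd
    rw [even_iff_two_dvd]
    omega
  · rintro ⟨r, rfl⟩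
    exact mem_zpowers_iff.2 ⟨r, by rw [← zpow_natCast, ← zpow_mul, Nat.cast_ofNat, two_mul]⟩

theorem mem_zpowers_sq_of_zpow_eq_one {m : ℕ} (hm : 0 < m) (hg : orderOf g = 2 * m) {q : ℤ}
    (hq : Odd q) {y : G} (hy : y ∈ zpowers g) (h : y ^ (m * q) = 1) : y ∈ zpowers (g ^ 2) := by
  obtain ⟨a, rfl⟩ := hy
  rw [← zpow_mul, ← orderOf_dvd_iff_zpow_eq_one, hg, Nat.cast_mul, Nat.cast_ofNat,
    show a * (m * q) = a * q * m by ring, mul_dvd_mul_iff_right (by positivity)] at h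
  refine (zpow_mem_zpowers_sq_iff (hg ▸ even_two_mul m)).2 ?_
  rcases Int.even_mul.1 (even_iff_two_dvd.2 h) with ha | hq'
  · exact ha
  · exact absurd hq (Int.not_odd_iff_even.2 hq')

end Parity

theorem inv_mul_mem_of_relIndex_eq_two {G : Type*} [Group G] {D K : Subgroup G}
    (hK : K.relIndex D = 2) {f δ : G} (hf : f ∈ D) (hfK : f ∉ K) (hδ : δ ∈ D) (hδK : δ ∉ K) :
    f⁻¹ * δ ∈ K := by
  have h := (mul_mem_iff_of_index_two hK (a := (⟨f, hf⟩ : D)⁻¹) (b := ⟨δ, hδ⟩)).2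
  simpa [mem_subgroupOf, hfK, hδK] using h

section RegularSubgroup

variable {Z : Type*} {D K : Subgroup (Perm Z)}

theorem transitive_of_forall_exists_apply_eq {z₀ : Z} (h : ∀ w, ∃ δ ∈ D, δ z₀ = w) :
    ∀ z w : Z, ∃ δ ∈ D, δ z = w := by
  intro z w
  obtain ⟨α, hα, rfl⟩ := h z
  obtain ⟨β, hβ, rfl⟩ := h w
  exact ⟨β * α⁻¹, mul_mem hβ (inv_mem hα), by simp⟩

theorem surjective_apply_of_transitive (htrans : ∀ z w : Z, ∃ δ ∈ D, δ z = w) (z : Z) :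
    Function.Surjective fun δ : D => (δ : Perm Z) z := fun w =>
  let ⟨δ, hδ, hδz⟩ := htrans z w
  ⟨⟨δ, hδ⟩, hδz⟩

theorem isRegularSubgroup_of_card_le [Finite Z] (htrans : ∀ z w : Z, ∃ δ ∈ D, δ z = w)
    (hcard : Nat.card D ≤ Nat.card Z) : IsRegularSubgroup D := by
  refine ⟨htrans, fun δ hδ hne z hz => hne ?_⟩
  have hinj := ((surjective_apply_of_transitive htrans z).bijective_of_nat_card_le hcard).1
  exact congrArg Subtype.val (@hinj ⟨δ, hδ⟩ 1 hz)

theorem IsRegularSubgroup.card_eq (hD : IsRegularSubgroup D) (z : Z) :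
    Nat.card D = Nat.card Z := by
  refine Nat.card_eq_of_bijective _ ⟨fun δ ε h => ?_, surjective_apply_of_transitive hD.1 z⟩
  by_contra hne
  refine hD.2 ((δ : Perm Z)⁻¹ * ε) (mul_mem (inv_mem δ.2) ε.2) ?_ z ?_
  · rwa [Ne, inv_mul_eq_one, ← Subtype.ext_iff]
  · simp [Perm.mul_apply, ← h]

theorem mapsTo_of_relIndex_eq_two (hK : K.relIndex D = 2) {f : Perm Z} (hf : f ∈ D)
    (hfK : f ∉ K) {S : Set Z} (hKS : ∀ k ∈ K, MapsTo k S S) (hfS : MapsTo f S S)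
    {δ : Perm Z} (hδ : δ ∈ D) : MapsTo δ S S := by
  by_cases hδK : δ ∈ K
  · exact hKS δ hδK
  · have h := hfS.comp (hKS _ (inv_mul_mem_of_relIndex_eq_two hK hf hfK hδ hδK))
    rwa [← Perm.coe_mul, mul_inv_cancel_left] at h

end RegularSubgroup

section Translation

variable {C : Type*} [Group C] {c : C}

theorem orderOf_toPermHom (c : C) : orderOf (toPermHom C C c) = orderOf c :=
  orderOf_injective (toPermHom C C) toPerm_injective c

theorem toPermHom_zpow_apply (c x : C) (k : ℤ) : (toPermHom C C c ^ k) x = c ^ k * x := by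
  rw [← map_zpow]
  rfl

theorem commute_of_zpowers_eq_top (hgen : zpowers c = ⊤) (x : C) : Commute c x := by
  obtain ⟨k, rfl⟩ := mem_zpowers_iff.1 (hgen ▸ mem_top x)
  exact Commute.self_zpow c k

theorem mem_zpowers_of_commute (hgen : zpowers c = ⊤) {τ : Perm C}
    (h : Commute τ (toPermHom C C c)) : τ ∈ zpowers (toPermHom C C c) := by
  obtain ⟨t, ht⟩ := mem_zpowers_iff.1 (hgen ▸ mem_top (τ 1))
  refine ⟨t, Equiv.ext fun x => ?_⟩
  obtain ⟨s, rfl⟩ := mem_zpowers_iff.1 (hgen ▸ mem_top x)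
  calc (toPermHom C C c ^ t) (c ^ s) = c ^ s * τ 1 := by
        rw [toPermHom_zpow_apply, ← ht, Commute.zpow_zpow_self]
    _ = (toPermHom C C c ^ s * τ) 1 := by rw [Perm.mul_apply, toPermHom_zpow_apply]
    _ = τ (c ^ s) := by rw [← (h.zpow_right s).eq, Perm.mul_apply, toPermHom_zpow_apply, mul_one]

theorem apply_eq_zpow_mul_apply_one (hgen : zpowers c = ⊤) {f : Perm C} {j : ℤ}
    (h : f * toPermHom C C c * f⁻¹ = toPermHom C C c ^ j) (y : C) : f y = y ^ j * f 1 := by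
  obtain ⟨s, rfl⟩ := mem_zpowers_iff.1 (hgen ▸ mem_top y)
  have hconj : f * toPermHom C C c ^ s = toPermHom C C c ^ (j * s) * f := by
    rw [zpow_mul, ← h, conj_zpow, inv_mul_cancel_right]
  calc f (c ^ s) = (f * toPermHom C C c ^ s) 1 := by
        rw [Perm.mul_apply, toPermHom_zpow_apply, mul_one]
    _ = (c ^ s) ^ j * f 1 := by
        rw [hconj, Perm.mul_apply, toPermHom_zpow_apply, ← zpow_mul, mul_comm]

def invTranslate (c : C) : Perm C :=
  toPermHom C C c * Equiv.inv C

theorem invTranslate_apply (c x : C) : invTranslate c x = c * x⁻¹ :=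
  rfl

theorem invTranslate_mul_self (hc : ∀ x, Commute c x) : invTranslate c * invTranslate c = 1 := by
  ext x
  rw [Perm.mul_apply, invTranslate_apply, invTranslate_apply, mul_inv_rev, inv_inv, ← mul_assoc,
    (hc x).eq, mul_inv_cancel_right, Perm.one_apply]

theorem invTranslate_conj_toPermHom (hc : ∀ x, Commute c x) :
    invTranslate c * toPermHom C C c * (invTranslate c)⁻¹ = (toPermHom C C c)⁻¹ := by
  rw [mul_inv_eq_iff_eq_mul, ← map_inv]
  ext x
  rw [Perm.mul_apply, Perm.mul_apply, invTranslate_apply, invTranslate_apply, toPermHom_apply,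
    toPermHom_apply, toPerm_apply, toPerm_apply, smul_eq_mul, smul_eq_mul, mul_inv_rev,
    inv_mul_cancel_left, ← mul_assoc, (hc x⁻¹).eq, mul_inv_cancel_right]

end Translation

section Holomorph

variable {m : ℕ} {C : Type*} [Group C] {c : C}

theorem eq_zpowers_sq_of_commute [Finite C] (hm : 0 < m) (hc : orderOf c = 2 * m)
    (hgen : zpowers c = ⊤) {K : Subgroup (Perm C)} (hK : Nat.card K = m)
    (hKσ : ∀ ρ ∈ K, ρ * toPermHom C C c = toPermHom C C c * ρ) :
    K = zpowers (toPermHom C C c ^ 2) := by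
  have hσ : orderOf (toPermHom C C c) = 2 * m := (orderOf_toPermHom c).trans hc
  refine eq_of_le_of_card_ge (fun τ hτ => ?_) ?_
  · refine mem_zpowers_sq_of_zpow_eq_one hm hσ odd_one
      (mem_zpowers_of_commute hgen (hKσ τ hτ)) ?_
    rw [mul_one, zpow_natCast, ← hK]
    exact orderOf_dvd_iff_pow_eq_one.1 (K.orderOf_dvd_natCard hτ)
  · rw [hK, Nat.card_zpowers, orderOf_pow_of_dvd two_ne_zero (hσ ▸ dvd_mul_right 2 m), hσ]
    omega

/- If `f 1` were a square, every element of `D = K ∪ f K` would preserve the squares of `C`,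
yet by transitivity some element of `D` sends the square `1` to the non-square `c`. -/
theorem apply_one_notMem_zpowers_sq (hc : Even (orderOf c)) (hgen : zpowers c = ⊤)
    {D : Subgroup (Perm C)} (htrans : ∀ z w : C, ∃ δ ∈ D, δ z = w)
    (hK : (zpowers (toPermHom C C c ^ 2)).relIndex D = 2) {f : Perm C} (hf : f ∈ D)
    (hfK : f ∉ zpowers (toPermHom C C c ^ 2)) {j : ℤ}
    (hfσ : f * toPermHom C C c * f⁻¹ = toPermHom C C c ^ j) :
    f 1 ∉ zpowers (c ^ 2) := by
  intro hf1
  have hKS : ∀ k ∈ zpowers (toPermHom C C c ^ 2),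
      MapsTo k (zpowers (c ^ 2) : Set C) (zpowers (c ^ 2)) := by
    intro k hk x hx
    obtain ⟨t, rfl⟩ := mem_zpowers_iff.1 hk
    rw [← map_pow, toPermHom_zpow_apply]
    exact mul_mem (zpow_mem (mem_zpowers _) t) hx
  have hfS : MapsTo f (zpowers (c ^ 2) : Set C) (zpowers (c ^ 2)) := fun y hy => by
    rw [SetLike.mem_coe, apply_eq_zpow_mul_apply_one hgen hfσ]
    exact mul_mem (zpow_mem hy j) hf1
  obtain ⟨δ, hδ, hδ1⟩ := htrans 1 c
  have hc2 := mapsTo_of_relIndex_eq_two hK hf hfK hKS hfS hδ (one_mem (zpowers (c ^ 2)))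
  rw [hδ1] at hc2
  exact Int.not_even_one ((zpow_mem_zpowers_sq_iff hc).1 (by rwa [zpow_one]))

theorem conj_eq_inv_of_isGoodDihedral [Finite C] (hm : 3 ≤ m) (hc : orderOf c = 2 * m)
    (hgen : zpowers c = ⊤) {D : Subgroup (Perm C)} (hD : IsGoodDihedral m (toPermHom C C c) D)
    {K : Subgroup (Perm C)} (hKD : K ≤ D) (hKcyc : IsCyclic K) (hKcard : Nat.card K = m)
    (hKD2 : K.relIndex D = 2) (hKσ : ∀ ρ ∈ K, ρ * toPermHom C C c = toPermHom C C c * ρ)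
    {f : Perm C} (hf : f ∈ D) (hfK : f ∉ K) :
    f * toPermHom C C c * f⁻¹ = (toPermHom C C c)⁻¹ := by
  obtain ⟨hnorm, hreg, ⟨e⟩, -⟩ := hD
  set σ := toPermHom C C c
  have hσ : orderOf σ = 2 * m := (orderOf_toPermHom c).trans hc
  have hK := eq_zpowers_sq_of_commute (by omega) hc hgen hKcard hKσ
  have : IsCyclic (K.subgroupOf D) := (MulEquiv.isCyclic (subgroupOfEquivOfLe hKD)).2 hKcyc
  have hσ2K : σ ^ 2 ∈ K := hK ▸ mem_zpowers _
  obtain ⟨hff, hinv⟩ := DihedralGroup.mul_self_eq_one_and_conj_eq_inv_of_mulEquiv hm e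
    (H := K.subgroupOf D) (by rw [Nat.card_congr (subgroupOfEquivOfLe hKD).toEquiv, hKcard])
    (x := ⟨f, hf⟩) (by rwa [mem_subgroupOf])
  replace hff : f * f = 1 := congrArg Subtype.val hff
  have hσ2 : f * σ ^ 2 * f⁻¹ = (σ ^ 2)⁻¹ :=
    congrArg Subtype.val (hinv ⟨σ ^ 2, hKD hσ2K⟩ (by rwa [mem_subgroupOf]))
  obtain ⟨j, hj⟩ := mem_zpowers_iff.1 ((mem_normalizer_iff.1 (hnorm hf) σ).1 (mem_zpowers σ))
  obtain ⟨q, hq⟩ : (m : ℤ) ∣ j + 1 := by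
    have : σ ^ (j * 2) = σ ^ (-2 : ℤ) := by
      rw [zpow_mul, hj, zpow_ofNat, conj_pow, hσ2, zpow_neg, zpow_ofNat]
    obtain ⟨u, hu⟩ := (zpow_eq_zpow_iff_modEq.1 this).dvd
    exact ⟨-u, by rw [hσ] at hu; push_cast at hu; linarith⟩
  rcases Int.even_or_odd q with ⟨r, rfl⟩ | hodd
  · rw [← hj]
    refine eq_inv_of_mul_eq_one_left ?_
    rw [← zpow_add_one, hq, ← orderOf_dvd_iff_zpow_eq_one, hσ]
    exact ⟨r, by push_cast; ring⟩
  · -- here `j ≡ m - 1 (mod 2m)`, and `f 1 ^ (j + 1) = f (f 1) = 1` makes `f 1` a square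
    refine absurd ?_ (apply_one_notMem_zpowers_sq (hc ▸ even_two_mul m) hgen hreg.1
      (hK ▸ hKD2) hf (hK ▸ hfK) hj.symm)
    refine mem_zpowers_sq_of_zpow_eq_one (by omega) hc hodd (hgen ▸ mem_top _) ?_
    rw [← hq, zpow_add_one, ← apply_eq_zpow_mul_apply_one hgen hj.symm, ← Perm.mul_apply, hff,
      Perm.one_apply]

theorem inv_mul_mem_zpowers_sq_of_conj_eq_inv (hc : Even (orderOf c)) (hgen : zpowers c = ⊤)
    {g δ : Perm C} (hg : g * toPermHom C C c * g⁻¹ = (toPermHom C C c)⁻¹)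
    (hδ : δ * toPermHom C C c * δ⁻¹ = (toPermHom C C c)⁻¹) (hg1 : g 1 ∉ zpowers (c ^ 2))
    (hδ1 : δ 1 ∉ zpowers (c ^ 2)) : g⁻¹ * δ ∈ zpowers (toPermHom C C c ^ 2) := by
  set σ := toPermHom C C c
  have hcomm : Commute (g⁻¹ * δ) σ := by
    have h1 : δ * σ = σ⁻¹ * δ := by rw [← hδ]; group
    have h2 : g⁻¹ * σ⁻¹ = σ * g⁻¹ := by rw [← hg]; group
    rw [Commute, SemiconjBy, mul_assoc, h1, ← mul_assoc, h2, mul_assoc]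
  obtain ⟨t, ht⟩ := mem_zpowers_iff.1 (mem_zpowers_of_commute hgen hcomm)
  obtain ⟨b, hb⟩ := mem_zpowers_iff.1 (hgen ▸ mem_top (g 1))
  have hδg : δ 1 = c ^ (-t + b) := by
    rw [← mul_inv_cancel_left g δ, ← ht, Perm.mul_apply, toPermHom_zpow_apply, mul_one,
      apply_eq_zpow_mul_apply_one hgen (hg.trans (zpow_neg_one σ).symm), ← hb, ← zpow_mul,
      ← zpow_add, mul_neg_one]
  rw [← hb, zpow_mem_zpowers_sq_iff hc] at hg1
  rw [hδg, zpow_mem_zpowers_sq_iff hc] at hδ1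
  have ht_even : Even t := by
    rw [Int.even_iff] at *
    omega
  exact ht ▸ (zpow_mem_zpowers_sq_iff ((orderOf_toPermHom c).symm ▸ hc)).2 ht_even

theorem le_of_isGoodDihedral [Finite C] (hm : 3 ≤ m) (hc : orderOf c = 2 * m)
    (hgen : zpowers c = ⊤) {D₁ D₂ : Subgroup (Perm C)}
    (h₁ : IsGoodDihedral m (toPermHom C C c) D₁) (h₂ : IsGoodDihedral m (toPermHom C C c) D₂) :
    D₁ ≤ D₂ := by
  have hceven : Even (orderOf c) := hc ▸ even_two_mul m
  obtain ⟨K₁, hK₁D, hK₁cyc, hK₁card, hK₁D2, hK₁σ⟩ := h₁.2.2.2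
  obtain ⟨K₂, hK₂D, hK₂cyc, hK₂card, hK₂D2, hK₂σ⟩ := h₂.2.2.2
  have hK₁ := eq_zpowers_sq_of_commute (by omega) hc hgen hK₁card hK₁σ
  have hK₂ := eq_zpowers_sq_of_commute (by omega) hc hgen hK₂card hK₂σ
  obtain ⟨g, hg, hgK⟩ : ∃ g ∈ D₂, g ∉ K₂ := by
    by_contra! h
    rw [relIndex_eq_one.2 h] at hK₂D2
    omega
  intro δ hδ
  by_cases hδK : δ ∈ K₁
  · exact hK₂D (hK₂ ▸ hK₁ ▸ hδK)
  have hgσ := conj_eq_inv_of_isGoodDihedral hm hc hgen h₂ hK₂D hK₂cyc hK₂card hK₂D2 hK₂σ hg hgK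
  have hδσ := conj_eq_inv_of_isGoodDihedral hm hc hgen h₁ hK₁D hK₁cyc hK₁card hK₁D2 hK₁σ hδ hδK
  have hgδ := inv_mul_mem_zpowers_sq_of_conj_eq_inv hceven hgen hgσ hδσ
    (apply_one_notMem_zpowers_sq hceven hgen h₂.2.1.1 (hK₂ ▸ hK₂D2) hg (hK₂ ▸ hgK)
      (hgσ.trans (zpow_neg_one _).symm))
    (apply_one_notMem_zpowers_sq hceven hgen h₁.2.1.1 (hK₁ ▸ hK₁D2) hδ (hK₁ ▸ hδK)
      (hδσ.trans (zpow_neg_one _).symm))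
  rw [← mul_inv_cancel_left g δ]
  exact mul_mem hg (hK₂D (hK₂ ▸ hgδ))

def dihedralHom (hc : orderOf c = 2 * m) (hgen : zpowers c = ⊤) : DihedralGroup m →* Perm C :=
  DihedralGroup.lift (toPermHom C C c ^ 2) (invTranslate c)
    (by rw [← pow_mul, ← hc, ← orderOf_toPermHom, pow_orderOf_eq_one])
    (invTranslate_mul_self (commute_of_zpowers_eq_top hgen))
    (by rw [← conj_pow, invTranslate_conj_toPermHom (commute_of_zpowers_eq_top hgen), inv_pow])

section DihedralHom

variable (hc : orderOf c = 2 * m) (hgen : zpowers c = ⊤)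

theorem dihedralHom_r_intCast (k : ℤ) :
    dihedralHom hc hgen (.r k) = (toPermHom C C c ^ 2) ^ k :=
  DihedralGroup.lift_r_intCast k

theorem dihedralHom_sr_intCast (k : ℤ) :
    dihedralHom hc hgen (.sr k) = invTranslate c * (toPermHom C C c ^ 2) ^ k :=
  DihedralGroup.lift_sr_intCast k

theorem range_dihedralHom_le_normalizer :
    (dihedralHom hc hgen).range ≤ normalizer (zpowers (toPermHom C C c) : Set (Perm C)) := by
  have hρN (k : ℤ) : (toPermHom C C c ^ 2) ^ k ∈ normalizer (zpowers (toPermHom C C c) : Set _) :=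
    le_normalizer (zpow_mem (pow_mem (mem_zpowers _) 2) k)
  have hιN : invTranslate c ∈ normalizer (zpowers (toPermHom C C c) : Set (Perm C)) := by
    rw [mem_normalizer_iff_map_conj_eq, MonoidHom.map_zpowers, MonoidHom.coe_coe,
      MulAut.conj_apply, invTranslate_conj_toPermHom (commute_of_zpowers_eq_top hgen),
      zpowers_inv]
  rintro _ ⟨g, rfl⟩
  rcases g with i | i <;>
    obtain ⟨k, rfl⟩ : ∃ k : ℤ, (k : ZMod m) = i := ⟨_, ZMod.intCast_zmod_cast i⟩
  · exact dihedralHom_r_intCast hc hgen k ▸ hρN k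
  · exact dihedralHom_sr_intCast hc hgen k ▸ mul_mem hιN (hρN k)

theorem transitive_range_dihedralHom : ∀ z w : C, ∃ δ ∈ (dihedralHom hc hgen).range, δ z = w := by
  have hρ_apply (t : ℤ) (x : C) : ((toPermHom C C c ^ 2) ^ t) x = c ^ (2 * t) * x := by
    rw [← zpow_natCast, ← zpow_mul, Nat.cast_ofNat, toPermHom_zpow_apply]
  refine transitive_of_forall_exists_apply_eq (z₀ := 1) fun w => ?_
  obtain ⟨a, rfl⟩ := mem_zpowers_iff.1 (hgen ▸ mem_top w)
  obtain ⟨k, rfl | rfl⟩ := Int.even_or_odd' a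
  · exact ⟨_, ⟨.r k, rfl⟩, by rw [dihedralHom_r_intCast, hρ_apply, mul_one]⟩
  · refine ⟨_, ⟨.sr (-k : ℤ), rfl⟩, ?_⟩
    rw [dihedralHom_sr_intCast, Perm.mul_apply, hρ_apply, mul_one, invTranslate_apply]
    group

end DihedralHom

theorem exists_isGoodDihedral [Finite C] (hm : 3 ≤ m) (hc : orderOf c = 2 * m)
    (hgen : zpowers c = ⊤) : ∃ D, IsGoodDihedral m (toPermHom C C c) D := by
  have : NeZero m := ⟨by omega⟩
  set σ := toPermHom C C c
  have hσ : orderOf σ = 2 * m := (orderOf_toPermHom c).trans hc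
  set ψ := dihedralHom hc hgen
  have hcardC : Nat.card C = 2 * m := (orderOf_eq_card_of_zpowers_eq_top hgen).symm.trans hc
  have hreg : IsRegularSubgroup ψ.range :=
    isRegularSubgroup_of_card_le (transitive_range_dihedralHom hc hgen) <| by
      rw [hcardC, ← DihedralGroup.nat_card]
      exact Nat.card_le_card_of_surjective _ ψ.rangeRestrict_surjective
  have hcardD : Nat.card ψ.range = 2 * m := (hreg.card_eq 1).trans hcardC
  have hKD : zpowers (σ ^ 2) ≤ ψ.range :=
    zpowers_le.2 ⟨.r (1 : ℤ), by rw [dihedralHom_r_intCast, zpow_one]⟩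
  have hKcard : Nat.card (zpowers (σ ^ 2)) = m := by
    rw [Nat.card_zpowers, orderOf_pow_of_dvd two_ne_zero (hσ ▸ dvd_mul_right 2 m), hσ]
    omega
  refine ⟨ψ.range, range_dihedralHom_le_normalizer hc hgen, hreg, ⟨?_⟩, zpowers (σ ^ 2), hKD,
    inferInstance, hKcard, ?_, ?_⟩
  · exact (MulEquiv.ofBijective ψ.rangeRestrict
      (ψ.rangeRestrict_surjective.bijective_of_nat_card_le
        (by rw [DihedralGroup.nat_card, hcardD]))).symm
  · have h := card_mul_index ((zpowers (σ ^ 2)).subgroupOf ψ.range)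
    rw [Nat.card_congr (subgroupOfEquivOfLe hKD).toEquiv, hKcard, hcardD] at h
    exact Nat.eq_of_mul_eq_mul_left (by omega : 0 < m) (h.trans (mul_comm 2 m))
  · intro ρ hρ
    obtain ⟨k, rfl⟩ := mem_zpowers_iff.1 hρ
    exact (((Commute.refl σ).pow_left 2).zpow_left k).eq

end Holomorph

/-- For `n = 2m` even, `Hol(C_n)` contains exactly one regular subgroup `D ≅ D_m`
whose index-2 cyclic subgroup of order `m` centralizes `σ`; moreover every element
of `D` outside that cyclic subgroup conjugates `σ` to `σ⁻¹`. -/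
theorem unique_dihedral_in_hol_cyclic (m : ℕ) (hm : 3 ≤ m) {C : Type*} [Group C]
    [Fintype C] (c : C) (hcard : Fintype.card C = 2 * m)
    (hgen : Subgroup.zpowers c = ⊤) (σ : Equiv.Perm C)
    (hσ : σ = MulAction.toPermHom C C c) :
    (∃! D : Subgroup (Equiv.Perm C), IsGoodDihedral m σ D) ∧
    ∀ D : Subgroup (Equiv.Perm C), IsGoodDihedral m σ D →
      ∀ K : Subgroup (Equiv.Perm C),
        (K ≤ D ∧ IsCyclic K ∧ Nat.card K = m ∧ K.relIndex D = 2 ∧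
          ∀ ρ ∈ K, ρ * σ = σ * ρ) →
        ∀ f ∈ D, f ∉ K → f * σ * f⁻¹ = σ⁻¹ := by
  subst hσ
  have hc : orderOf c = 2 * m := by
    rw [orderOf_eq_card_of_zpowers_eq_top hgen, Nat.card_eq_fintype_card, hcard]
  obtain ⟨D, hD⟩ := exists_isGoodDihedral hm hc hgen
  refine ⟨⟨D, hD, fun D' hD' => (le_of_isGoodDihedral hm hc hgen hD' hD).antisymm
    (le_of_isGoodDihedral hm hc hgen hD hD')⟩, ?_⟩
  rintro D hD K ⟨hKD, hKcyc, hKcard, hKD2, hKσ⟩ f hf hfK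
  exact conj_eq_inv_of_isGoodDihedral hm hc hgen hD hKD hKcyc hKcard hKD2 hKσ hf hfK
end
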